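/- Given an unsigned graph G = (V, E), construct the signed graph G' by: keeping V with all edges of E as positive edges, and for each v ∈ V attaching d'(v) = ⌈(deg(v)+1)/2⌉ disjoint negative 4-cliques, connecting one vertex of each such clique to v by a negative edge. Then a set A ⊆ V is a defensive alliance of G if and only if A is a defensive alliance of G'. -/

import Mathlib

open Set

variable {V : Type*}

/-- Number of `G`-neighbors of `v` inside the set `S`. -/
noncomputable def ndegOn (G : SimpleGraph V) (S : Set V) (v : V) : ℕ := (S ∩ {u | G.Adj v u}).ncard

/-- Total number of `G`-neighbors of `v`. -/
noncomputable def ndeg (G : SimpleGraph V) (v : V) : ℕ := {u | G.Adj v u}.ncard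

/-- `S` is a defensive alliance in the signed graph `(V, Gp, Gn)`. -/
def IsDefAlliance (Gp Gn : SimpleGraph V) (S : Set V) : Prop :=
  S.Nonempty ∧ ∀ v ∈ S,
    ndegOn Gn S v ≤ ndegOn Gp S v + 1 ∧ ndegOn Gn Sᶜ v ≤ ndegOn Gp S v + 1

/-- Defensive alliance number: minimum size of a defensive alliance. -/
noncomputable def asd (Gp Gn : SimpleGraph V) : ℕ :=
  sInf {n | ∃ S : Set V, IsDefAlliance Gp Gn S ∧ S.ncard = n}

/-- Defensive alliance in an unsigned graph. -/
def IsDefAllianceU (G : SimpleGraph V) (A : Set V) : Prop :=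
  A.Nonempty ∧ ∀ v ∈ A, ndegOn G Aᶜ v ≤ ndegOn G A v + 1

/-- d'(v) = ⌈(deg(v)+1)/2⌉. -/
noncomputable def dprime (G : SimpleGraph V) (v : V) : ℕ := (ndeg G v + 2) / 2

/-- Vertex set of the constructed signed graph: original vertices plus, for each
vertex v, d'(v) disjoint 4-cliques. -/
def Vext (G : SimpleGraph V) : Type _ := V ⊕ (Σ v : V, Fin (dprime G v) × Fin 4)

/-- Positive edges of the construction: precisely the original edges of G. -/
def Gpos (G : SimpleGraph V) : SimpleGraph (Vext G) :=
  SimpleGraph.fromRel (fun a b =>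
    ∃ u w : V, a = Sum.inl u ∧ b = Sum.inl w ∧ G.Adj u w)

/-- Negative edges of the construction: all edges inside each attached 4-clique,
plus an edge from vertex v to one designated vertex of each of its cliques. -/
def Gneg (G : SimpleGraph V) : SimpleGraph (Vext G) :=
  SimpleGraph.fromRel (fun a b =>
    (∃ (u : V) (i : Fin (dprime G u)),
        a = Sum.inl u ∧ b = Sum.inr ⟨u, i, 0⟩) ∨
    (∃ (u : V) (i : Fin (dprime G u)) (j k : Fin 4),
        a = Sum.inr ⟨u, i, j⟩ ∧ b = Sum.inr ⟨u, i, k⟩))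

/-!
Only original vertices lie in `Sum.inl '' A`, so only their conditions matter. At an original
vertex `u`, the positive neighbours inside `Sum.inl '' A` are the `G`-neighbours in `A`, there are
no negative neighbours inside, and the negative neighbours outside are the `d'(u)` attachment
vertices of its cliques. The signed conditions thus reduce to `d'(u) ≤ deg_A(u) + 1`, and since
`deg_A(u) + deg_{V∖A}(u) = deg(u)`, this is exactly `deg_{V∖A}(u) ≤ deg_A(u) + 1`.
-/

lemma ndegOn_add_ndegOn_compl [Finite V] (G : SimpleGraph V) (A : Set V) (u : V) :
    ndegOn G A u + ndegOn G Aᶜ u = ndeg G u := by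
  unfold ndegOn ndeg
  rw [inter_comm A, inter_comm Aᶜ, ← sdiff_eq]
  exact ncard_inter_add_ncard_sdiff_eq_ncard _ _ (toFinite _)

lemma dprime_le_iff [Finite V] (G : SimpleGraph V) (A : Set V) (u : V) :
    dprime G u ≤ ndegOn G A u + 1 ↔ ndegOn G Aᶜ u ≤ ndegOn G A u + 1 := by
  have hsplit := ndegOn_add_ndegOn_compl G A u
  unfold dprime
  omega

section Construction

variable (G : SimpleGraph V)

lemma Gpos_adj_inl (u : V) (x : Vext G) :
    (Gpos G).Adj (Sum.inl u) x ↔ ∃ w, x = Sum.inl w ∧ G.Adj u w := by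
  rcases x with w | c
  · simpa [Gpos, Vext, G.adj_comm w u] using G.ne_of_adj
  · simp [Gpos, Vext]

lemma Gneg_adj_inl (u : V) (x : Vext G) :
    (Gneg G).Adj (Sum.inl u) x ↔ ∃ i : Fin (dprime G u), x = Sum.inr ⟨u, i, 0⟩ := by
  rcases x with w | ⟨w, i, j⟩ <;> simp [Gneg, Vext]

variable (A : Set V) (u : V)

/- `Vext G` is a plain `def`, so `simp` and `rw` with `Sum` and `Set` lemmas do not match terms
such as `Sum.inl '' A : Set (Vext G)`; the set equalities below are therefore proved by hand. -/

lemma ndegOn_Gpos_image_inl :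
    ndegOn (Gpos G) (Sum.inl '' A) (Sum.inl u) = ndegOn G A u := by
  unfold ndegOn
  rw [← ncard_image_of_injective _
    (Sum.inl_injective : Function.Injective (Sum.inl : V → Vext G))]
  congr 1
  ext x
  constructor
  · rintro ⟨⟨w, hw, rfl⟩, hadj⟩
    obtain ⟨w', hw', h⟩ := (Gpos_adj_inl G u _).1 hadj
    cases hw'
    exact ⟨w, ⟨hw, h⟩, rfl⟩
  · rintro ⟨w, ⟨hw, h⟩, rfl⟩
    exact ⟨⟨w, hw, rfl⟩, (Gpos_adj_inl G u _).2 ⟨w, rfl, h⟩⟩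

lemma ndegOn_Gneg_image_inl :
    ndegOn (Gneg G) (Sum.inl '' A) (Sum.inl u) = 0 := by
  unfold ndegOn
  convert ncard_empty (Vext G)
  refine eq_empty_iff_forall_notMem.2 ?_
  rintro x ⟨⟨w, -, rfl⟩, hadj⟩
  obtain ⟨i, hi⟩ := (Gneg_adj_inl G u _).1 hadj
  exact Sum.inl_ne_inr hi

lemma ndegOn_Gneg_compl_image_inl :
    ndegOn (Gneg G) (Sum.inl '' A)ᶜ (Sum.inl u) = dprime G u := by
  unfold ndegOn
  rw [← Nat.card_fin (dprime G u), ← ncard_range_of_injective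
    (f := fun i : Fin (dprime G u) => (Sum.inr ⟨u, i, 0⟩ : Vext G))
    (fun i j h => by simpa using h)]
  congr 1
  ext x
  constructor
  · rintro ⟨-, hadj⟩
    obtain ⟨i, rfl⟩ := (Gneg_adj_inl G u _).1 hadj
    exact ⟨i, rfl⟩
  · rintro ⟨i, rfl⟩
    exact ⟨fun ⟨w, _, h⟩ => Sum.inl_ne_inr h, (Gneg_adj_inl G u _).2 ⟨i, rfl⟩⟩

lemma isDefAlliance_condition_inl_iff [Finite V] :
    (ndegOn (Gneg G) (Sum.inl '' A) (Sum.inl u) ≤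
        ndegOn (Gpos G) (Sum.inl '' A) (Sum.inl u) + 1 ∧
      ndegOn (Gneg G) (Sum.inl '' A)ᶜ (Sum.inl u) ≤
        ndegOn (Gpos G) (Sum.inl '' A) (Sum.inl u) + 1) ↔
      ndegOn G Aᶜ u ≤ ndegOn G A u + 1 := by
  rw [ndegOn_Gneg_image_inl, ndegOn_Gneg_compl_image_inl, ndegOn_Gpos_image_inl,
    dprime_le_iff]
  exact and_iff_right (Nat.zero_le _)

end Construction

theorem stmt18 [Fintype V] (G : SimpleGraph V) (A : Set V) :
    IsDefAllianceU G A ↔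
      IsDefAlliance (Gpos G) (Gneg G) (Sum.inl '' A) := by
  refine and_congr image_nonempty.symm (Iff.trans ?_ forall_mem_image.symm)
  exact forall₂_congr fun u _ => (isDefAlliance_condition_inl_iff G A u).symm
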